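/- Let α, β ∈ ℕ and n ≥ 2. Then D_x^{α+β+3}[(x-1)^{α+2}(x+1)^{β+2} P_{n-2}^{α+2,β+2}(x)] = 2·(n-1)_{α+β+3}·P_{n-1}^{β+1,α+1}(x). -/

import Mathlib

/-!
Write `P_m^{a,b}(x) = ∑ₖ cₖ ((1 - x)/2)^k` with the Pochhammer denominator `(a+1)_k` cleared
from `cₖ`. Each of the following differential contiguous relations is a termwise identity
between the `cₖ`:

* `D[(x-1)^(A+1) (x+1)^(B+1) P_m^{A+1,B+1}] = 2(m+1) (x-1)^A (x+1)^B P_{m+1}^{A,B}`,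
* `D[(x-1)^(A+1) P_m^{A+1,b}] = (m+A+1) (x-1)^A P_m^{A,b+1}`,
* `D[(x+1)^(B+1) P_m^{a,B+1}] = (m+B+1) (x+1)^B P_m^{a+1,B}`,
* `D P_{m+1}^{a,b} = (m+a+b+2)/2 · P_m^{a+1,b+1}`.

For `β ≤ α`, the first `β + 2` derivatives use the first rule and remove `(x+1)^(β+2)`; the
next `α - β` use the second and move the remaining power of `x - 1` into the second parameter;
the last `β + 1` lower the degree by the fourth rule, which ends at `P_{m+1}^{β+1,α+1}`. The
case `α ≤ β` is the mirror image, with the third rule in place of the second.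
-/

/-- Pochhammer symbol `(a)_k` for real `a`. -/
noncomputable def poch (a : ℝ) (k : ℕ) : ℝ := (ascPochhammer ℝ k).eval a

/-- The Jacobi polynomial
`P_n^{α,β}(x) = ((α+1)_n / n!) ⬝ ₂F₁(-n, n+α+β+1; α+1; (1-x)/2)`,
written as the terminating hypergeometric sum. -/
noncomputable def jacobiP (n : ℕ) (a b x : ℝ) : ℝ :=
  (poch (a + 1) n / (Nat.factorial n : ℝ)) *
    ∑ k ∈ Finset.range (n + 1),
      (poch (-(n : ℝ)) k * poch ((n : ℝ) + a + b + 1) k) /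
        (poch (a + 1) k * (Nat.factorial k : ℝ)) * ((1 - x) / 2) ^ k

open Finset Nat

lemma poch_zero (a : ℝ) : poch a 0 = 1 := by simp [poch]

lemma poch_succ_right (a : ℝ) (k : ℕ) : poch a (k + 1) = poch a k * (a + k) := by
  simp [poch, ascPochhammer_succ_right]

lemma poch_succ_left (a : ℝ) (k : ℕ) : poch a (k + 1) = a * poch (a + 1) k := by
  simp [poch, ascPochhammer_succ_left]

lemma poch_add (a : ℝ) (j k : ℕ) : poch a (j + k) = poch a j * poch (a + j) k := by
  simpa [poch, Polynomial.eval_comp] using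
    (congrArg (Polynomial.eval a) (ascPochhammer_mul ℝ j k)).symm

lemma mul_poch_add_one (x : ℝ) (j : ℕ) : x * poch (x + 1) j = poch x j * (x + j) := by
  rw [← poch_succ_left, poch_succ_right]

/-- The `k`-th coefficient of `jacobiP m a b` in powers of `(1 - x)/2`, with `(a+1)_m / (a+1)_k`
written as `(a+1+k)_{m-k}` so that nothing is divided by a Pochhammer symbol. The factor `(-m)_k`
makes it vanish for `k > m`, where the truncated `m - k` is junk. -/
noncomputable def jacobiCoeff (m : ℕ) (a b : ℝ) (k : ℕ) : ℝ :=
  poch (-m) k * poch (m + a + b + 1) k * poch (a + 1 + k) (m - k) / (m ! * k !)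

noncomputable def jacobiSeries (m : ℕ) (a b x : ℝ) : ℝ :=
  ∑ k ∈ range (m + 1), jacobiCoeff m a b k * ((1 - x) / 2) ^ k

lemma jacobiCoeff_eq_zero_of_lt {m k : ℕ} (h : m < k) (a b : ℝ) : jacobiCoeff m a b k = 0 := by
  simp [jacobiCoeff, poch, ascPochhammer_eval_neg_coe_nat_of_lt h]

lemma jacobiP_eq_jacobiSeries (m : ℕ) {a : ℝ} (ha : 0 < a + 1) (b x : ℝ) :
    jacobiP m a b x = jacobiSeries m a b x := by
  rw [jacobiP, jacobiSeries, mul_sum]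
  refine sum_congr rfl fun k hk => ?_
  have hsplit : poch (a + 1) m = poch (a + 1) k * poch (a + 1 + k) (m - k) := by
    rw [← poch_add, Nat.add_sub_cancel' (Nat.lt_succ_iff.mp (mem_range.mp hk))]
  have : poch (a + 1) k ≠ 0 := (ascPochhammer_pos k (a + 1) ha).ne'
  rw [jacobiCoeff, hsplit]
  field_simp

lemma succ_mul_jacobiCoeff_succ (m : ℕ) (a b : ℝ) (k : ℕ) :
    (k + 1) * jacobiCoeff (m + 1) a b (k + 1) =
      -(m + a + b + 2) * jacobiCoeff m (a + 1) (b + 1) k := by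
  simp only [jacobiCoeff, poch_succ_left, Nat.succ_sub_succ, factorial_succ]
  push_cast
  ring_nf
  field_simp
  ring

lemma jacobiCoeff_contiguous_a (m : ℕ) (a b : ℝ) (k : ℕ) :
    (a + k + 1) * jacobiCoeff m (a + 1) b k = (m + a + 1) * jacobiCoeff m a (b + 1) k := by
  rcases lt_or_ge m k with hmk | hkm
  · simp [jacobiCoeff_eq_zero_of_lt hmk]
  obtain ⟨j, rfl⟩ := Nat.exists_eq_add_of_le hkm
  simp only [jacobiCoeff, Nat.add_sub_cancel_left]
  push_cast
  linear_combination (norm := ring_nf)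
    (poch (-(k + j : ℝ)) k * poch (k + j + a + b + 2) k / ((k + j) ! * k !)) *
      mul_poch_add_one (a + 1 + k) j

lemma jacobiCoeff_contiguous_b (m : ℕ) (a b : ℝ) (k : ℕ) :
    (b + k + 1) * jacobiCoeff m a (b + 1) k - (k + 1) * jacobiCoeff m a (b + 1) (k + 1) =
      (m + b + 1) * jacobiCoeff m (a + 1) b k := by
  rcases lt_trichotomy m k with hmk | rfl | hkm
  · simp [jacobiCoeff_eq_zero_of_lt hmk, jacobiCoeff_eq_zero_of_lt (hmk.trans k.lt_succ_self)]
  · rw [jacobiCoeff_eq_zero_of_lt m.lt_succ_self]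
    simp only [jacobiCoeff, Nat.sub_self, poch_zero]
    ring_nf
  obtain ⟨j, rfl⟩ := Nat.exists_eq_add_of_lt hkm
  simp only [jacobiCoeff, poch_succ_right _ k, factorial_succ,
    show k + j + 1 - k = j + 1 by omega, show k + j + 1 - (k + 1) = j by omega,
    poch_succ_left (a + 1 + k) j, poch_succ_right (a + 1 + 1 + k) j]
  push_cast
  ring_nf
  field_simp
  ring

lemma jacobiCoeff_contiguous_degree_zero (m : ℕ) (a b : ℝ) :
    (a + 1) * jacobiCoeff m (a + 1) (b + 1) 0 = (m + 1) * jacobiCoeff (m + 1) a b 0 := by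
  simp only [jacobiCoeff, poch_zero, Nat.sub_zero, poch_succ_left, factorial_succ]
  push_cast
  ring_nf
  field_simp
  ring

lemma jacobiCoeff_contiguous_degree_succ (m : ℕ) (a b : ℝ) (k : ℕ) :
    (a + k + 2) * jacobiCoeff m (a + 1) (b + 1) (k + 1) -
        (a + b + k + 2) * jacobiCoeff m (a + 1) (b + 1) k =
      (m + 1) * jacobiCoeff (m + 1) a b (k + 1) := by
  rcases lt_trichotomy m k with hmk | rfl | hkm
  · simp [jacobiCoeff_eq_zero_of_lt hmk, jacobiCoeff_eq_zero_of_lt (hmk.trans k.lt_succ_self),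
      jacobiCoeff_eq_zero_of_lt (Nat.succ_lt_succ hmk)]
  · rw [jacobiCoeff_eq_zero_of_lt m.lt_succ_self]
    simp only [jacobiCoeff, Nat.sub_self, poch_zero, poch_succ_left, factorial_succ]
    push_cast
    ring_nf
    field_simp
    ring
  obtain ⟨j, rfl⟩ := Nat.exists_eq_add_of_lt hkm
  rw [jacobiCoeff, jacobiCoeff, jacobiCoeff, show k + j + 1 - k = j + 1 by omega,
    show k + j + 1 - (k + 1) = j by omega, show k + j + 1 + 1 - (k + 1) = j + 1 by omega,
    poch_succ_right (-((k + j + 1 : ℕ) : ℝ)) k,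
    poch_succ_right (↑(k + j + 1) + (a + 1) + (b + 1) + 1) k,
    poch_succ_left (-((k + j + 1 + 1 : ℕ) : ℝ)) k,
    poch_succ_left (↑(k + j + 1 + 1) + a + b + 1) k,
    poch_succ_left _ j, poch_succ_left _ j]
  simp only [factorial_succ]
  push_cast
  ring_nf
  field_simp
  ring

lemma hasDerivAt_sum_mul_pow (c : ℕ → ℝ) (n : ℕ) (x : ℝ) :
    HasDerivAt (fun t => ∑ k ∈ range (n + 1), c k * ((1 - t) / 2) ^ k)
      (-(1 / 2) * ∑ k ∈ range n, (k + 1) * c (k + 1) * ((1 - x) / 2) ^ k) x := by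
  have hu : HasDerivAt (fun t : ℝ => (1 - t) / 2) (-1 / 2) x := by
    simpa using ((hasDerivAt_id x).const_sub 1).div_const 2
  refine (HasDerivAt.fun_sum fun k _ => (hu.fun_pow k).const_mul (c k)).congr_deriv ?_
  rw [sum_range_succ', mul_sum]
  simp only [CharP.cast_eq_zero, zero_mul, mul_zero, add_zero, Nat.cast_add, Nat.cast_one,
    Nat.add_sub_cancel]
  exact sum_congr rfl fun k _ => by ring

lemma hasDerivAt_jacobiSeries (m : ℕ) (a b x : ℝ) :
    HasDerivAt (jacobiSeries m a b)
      (-(1 / 2) * ∑ k ∈ range m, (k + 1) * jacobiCoeff m a b (k + 1) * ((1 - x) / 2) ^ k) x :=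
  hasDerivAt_sum_mul_pow _ m x

lemma sub_one_mul_deriv_jacobiSeries (m : ℕ) (a b x : ℝ) :
    (x - 1) * deriv (jacobiSeries m a b) x =
      ∑ k ∈ range (m + 1), k * jacobiCoeff m a b k * ((1 - x) / 2) ^ k := by
  rw [(hasDerivAt_jacobiSeries m a b x).deriv, sum_range_succ', mul_sum, mul_sum]
  simp only [CharP.cast_eq_zero, zero_mul, add_zero, Nat.cast_add, Nat.cast_one]
  exact sum_congr rfl fun k _ => by ring

lemma hasDerivAt_jacobiSeries_succ (m : ℕ) (a b x : ℝ) :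
    HasDerivAt (jacobiSeries (m + 1) a b)
      ((m + a + b + 2) / 2 * jacobiSeries m (a + 1) (b + 1) x) x := by
  refine (hasDerivAt_jacobiSeries (m + 1) a b x).congr_deriv ?_
  rw [jacobiSeries, mul_sum, mul_sum]
  refine sum_congr rfl fun k _ => ?_
  linear_combination (-(1 / 2) * ((1 - x) / 2) ^ k) * succ_mul_jacobiCoeff_succ m a b k

lemma jacobiSeries_contiguous_a (m : ℕ) (a b x : ℝ) :
    (a + 1) * jacobiSeries m (a + 1) b x + (x - 1) * deriv (jacobiSeries m (a + 1) b) x =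
      (m + a + 1) * jacobiSeries m a (b + 1) x := by
  rw [sub_one_mul_deriv_jacobiSeries, jacobiSeries, jacobiSeries, mul_sum, mul_sum,
    ← sum_add_distrib]
  exact sum_congr rfl fun k _ => by
    linear_combination ((1 - x) / 2) ^ k * jacobiCoeff_contiguous_a m a b k

lemma jacobiSeries_contiguous_b (m : ℕ) (a b x : ℝ) :
    (b + 1) * jacobiSeries m a (b + 1) x + (x + 1) * deriv (jacobiSeries m a (b + 1)) x =
      (m + b + 1) * jacobiSeries m (a + 1) b x := by
  have hD := (hasDerivAt_jacobiSeries m a (b + 1) x).deriv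
  rw [← eventually_constant_sum
    (fun k hk => by simp [jacobiCoeff_eq_zero_of_lt (Nat.lt_succ_of_le hk)]) m.le_succ] at hD
  rw [show x + 1 = (x - 1) + 2 by ring, add_mul (x - 1), sub_one_mul_deriv_jacobiSeries, hD, jacobiSeries,
    jacobiSeries, mul_sum, mul_sum, mul_sum, ← sum_add_distrib, mul_sum, ← sum_add_distrib]
  exact sum_congr rfl fun k _ => by
    linear_combination ((1 - x) / 2) ^ k * jacobiCoeff_contiguous_b m a b k

lemma succ_mul_jacobiSeries_succ (m : ℕ) (a b x : ℝ) :
    (m + 1) * jacobiSeries (m + 1) a b x =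
      ∑ k ∈ range (m + 1), (a + k + 1) * jacobiCoeff m (a + 1) (b + 1) k * ((1 - x) / 2) ^ k -
        (1 - x) / 2 * ∑ k ∈ range (m + 1),
          (a + b + k + 2) * jacobiCoeff m (a + 1) (b + 1) k * ((1 - x) / 2) ^ k := by
  have hT := eventually_constant_sum (N := m + 1) (n := m + 2)
    (u := fun k => (a + k + 1) * jacobiCoeff m (a + 1) (b + 1) k * ((1 - x) / 2) ^ k)
    (fun k hk => by simp [jacobiCoeff_eq_zero_of_lt (Nat.lt_of_succ_le hk)]) (by omega)
  rw [← hT, sum_range_succ', jacobiSeries, sum_range_succ', mul_add, mul_sum, mul_sum,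
    add_sub_right_comm, ← sum_sub_distrib]
  congr 1
  · refine sum_congr rfl fun k _ => ?_
    push_cast
    linear_combination -((1 - x) / 2) ^ (k + 1) * jacobiCoeff_contiguous_degree_succ m a b k
  · push_cast
    linear_combination -jacobiCoeff_contiguous_degree_zero m a b

lemma jacobiSeries_contiguous_degree (m : ℕ) (a b x : ℝ) :
    (a + 1) * (x + 1) * jacobiSeries m (a + 1) (b + 1) x +
        (b + 1) * (x - 1) * jacobiSeries m (a + 1) (b + 1) x +
        (x - 1) * (x + 1) * deriv (jacobiSeries m (a + 1) (b + 1)) x =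
      2 * (m + 1) * jacobiSeries (m + 1) a b x := by
  have hT : (a + 1) * jacobiSeries m (a + 1) (b + 1) x +
        (x - 1) * deriv (jacobiSeries m (a + 1) (b + 1)) x =
      ∑ k ∈ range (m + 1),
        (a + k + 1) * jacobiCoeff m (a + 1) (b + 1) k * ((1 - x) / 2) ^ k := by
    rw [sub_one_mul_deriv_jacobiSeries, jacobiSeries, mul_sum, ← sum_add_distrib]
    exact sum_congr rfl fun k _ => by ring
  have hU : (b + 1) * jacobiSeries m (a + 1) (b + 1) x +
      ∑ k ∈ range (m + 1), (a + k + 1) * jacobiCoeff m (a + 1) (b + 1) k * ((1 - x) / 2) ^ k =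
      ∑ k ∈ range (m + 1),
        (a + b + k + 2) * jacobiCoeff m (a + 1) (b + 1) k * ((1 - x) / 2) ^ k := by
    rw [jacobiSeries, mul_sum, ← sum_add_distrib]
    exact sum_congr rfl fun k _ => by ring
  linear_combination (x + 1) * hT + (x - 1) * hU - 2 * succ_mul_jacobiSeries_succ m a b x

lemma differentiable_jacobiSeries (m : ℕ) (a b : ℝ) : Differentiable ℝ (jacobiSeries m a b) :=
  fun x => (hasDerivAt_jacobiSeries m a b x).differentiableAt

lemma hasDerivAt_sub_one_pow_mul_jacobiSeries (m A : ℕ) (b x : ℝ) :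
    HasDerivAt (fun t => (t - 1) ^ (A + 1) * jacobiSeries m (A + 1) b t)
      ((m + A + 1) * ((x - 1) ^ A * jacobiSeries m A (b + 1) x)) x := by
  refine ((((hasDerivAt_id x).sub_const 1).fun_pow (A + 1)).mul
    (differentiable_jacobiSeries m (A + 1) b x).hasDerivAt).congr_deriv ?_
  simp only [id, Nat.add_sub_cancel, Nat.cast_add, Nat.cast_one]
  linear_combination (x - 1) ^ A * jacobiSeries_contiguous_a m A b x

lemma hasDerivAt_add_one_pow_mul_jacobiSeries (m B : ℕ) (a x : ℝ) :
    HasDerivAt (fun t => (t + 1) ^ (B + 1) * jacobiSeries m a (B + 1) t)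
      ((m + B + 1) * ((x + 1) ^ B * jacobiSeries m (a + 1) B x)) x := by
  refine ((((hasDerivAt_id x).add_const 1).fun_pow (B + 1)).mul
    (differentiable_jacobiSeries m a (B + 1) x).hasDerivAt).congr_deriv ?_
  simp only [id, Nat.add_sub_cancel, Nat.cast_add, Nat.cast_one]
  linear_combination (x + 1) ^ B * jacobiSeries_contiguous_b m a B x

lemma hasDerivAt_sub_one_pow_mul_add_one_pow_mul_jacobiSeries (m A B : ℕ) (x : ℝ) :
    HasDerivAt (fun t => (t - 1) ^ (A + 1) * (t + 1) ^ (B + 1) * jacobiSeries m (A + 1) (B + 1) t)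
      (2 * (m + 1) * ((x - 1) ^ A * (x + 1) ^ B * jacobiSeries (m + 1) A B x)) x := by
  refine (((((hasDerivAt_id x).sub_const 1).fun_pow (A + 1)).fun_mul
    (((hasDerivAt_id x).add_const 1).fun_pow (B + 1))).mul
    (differentiable_jacobiSeries m (A + 1) (B + 1) x).hasDerivAt).congr_deriv ?_
  simp only [id, Nat.add_sub_cancel, Nat.cast_add, Nat.cast_one]
  linear_combination (x - 1) ^ A * (x + 1) ^ B * jacobiSeries_contiguous_degree m A B x

lemma iterate_deriv_const_mul (c : ℝ) (f : ℝ → ℝ) (j : ℕ) :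
    deriv^[j] (fun x => c * f x) = fun x => c * deriv^[j] f x := by
  funext x
  simpa only [iteratedDeriv_eq_iterate] using iteratedDeriv_const_mul_field c f (x := x)

lemma iterate_deriv_jacobiSeries (j m : ℕ) (a b : ℝ) :
    deriv^[j] (jacobiSeries (m + j) a b) =
      fun x => poch (m + j + a + b + 1) j / 2 ^ j * jacobiSeries m (a + j) (b + j) x := by
  induction j generalizing a b with
  | zero => funext x; simp [poch_zero]
  | succ j ih =>
    rw [Function.iterate_succ_apply, ← add_assoc,
      funext fun x => (hasDerivAt_jacobiSeries_succ (m + j) a b x).deriv,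
      iterate_deriv_const_mul, ih]
    funext x
    rw [poch_succ_left]
    push_cast
    ring_nf

lemma iterate_deriv_sub_one_pow_mul_jacobiSeries (j m A : ℕ) (b : ℝ) :
    deriv^[j] (fun t => (t - 1) ^ (A + j) * jacobiSeries m (A + j : ℕ) b t) =
      fun x => poch (m + A + 1) j * ((x - 1) ^ A * jacobiSeries m A (b + j) x) := by
  induction j generalizing b with
  | zero => funext x; simp [poch_zero]
  | succ j ih =>
    rw [Function.iterate_succ_apply, ← add_assoc, Nat.cast_succ,
      funext fun x => (hasDerivAt_sub_one_pow_mul_jacobiSeries m (A + j) b x).deriv,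
      iterate_deriv_const_mul, ih]
    funext x
    rw [poch_succ_right]
    push_cast
    ring_nf

lemma iterate_deriv_add_one_pow_mul_jacobiSeries (j m B : ℕ) (a : ℝ) :
    deriv^[j] (fun t => (t + 1) ^ (B + j) * jacobiSeries m a (B + j : ℕ) t) =
      fun x => poch (m + B + 1) j * ((x + 1) ^ B * jacobiSeries m (a + j) B x) := by
  induction j generalizing a with
  | zero => funext x; simp [poch_zero]
  | succ j ih =>
    rw [Function.iterate_succ_apply, ← add_assoc, Nat.cast_succ,
      funext fun x => (hasDerivAt_add_one_pow_mul_jacobiSeries m (B + j) a x).deriv,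
      iterate_deriv_const_mul, ih]
    funext x
    rw [poch_succ_right]
    push_cast
    ring_nf

lemma iterate_deriv_sub_one_pow_mul_add_one_pow_mul_jacobiSeries (j m A B : ℕ) :
    deriv^[j] (fun t => (t - 1) ^ (A + j) * (t + 1) ^ (B + j) *
        jacobiSeries m (A + j : ℕ) (B + j : ℕ) t) =
      fun x => 2 ^ j * poch (m + 1) j *
        ((x - 1) ^ A * (x + 1) ^ B * jacobiSeries (m + j) A B x) := by
  induction j generalizing m with
  | zero => funext x; simp [poch_zero]
  | succ j ih =>
    rw [Function.iterate_succ_apply, ← add_assoc, ← add_assoc, Nat.cast_succ, Nat.cast_succ,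
      funext fun x =>
        (hasDerivAt_sub_one_pow_mul_add_one_pow_mul_jacobiSeries m (A + j) (B + j) x).deriv,
      iterate_deriv_const_mul, ih, add_right_comm m 1 j]
    funext x
    rw [poch_succ_left]
    push_cast
    ring_nf

lemma iterate_deriv_weight_mul_jacobiSeries_of_le (α β m : ℕ) (h : β ≤ α) :
    deriv^[α + β + 3] (fun t => (t - 1) ^ (α + 2) * (t + 1) ^ (β + 2) *
        jacobiSeries m (α + 2) (β + 2) t) =
      fun x => 2 * poch (m + 1) (α + β + 3) * jacobiSeries (m + 1) (β + 1) (α + 1) x := by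
  obtain ⟨d, rfl⟩ := Nat.exists_eq_add_of_le h
  have h1 : (fun t => (t - 1) ^ (β + d + 2) * (t + 1) ^ (β + 2) *
        jacobiSeries m (↑(β + d) + 2) (β + 2) t) =
      fun t => (t - 1) ^ (d + (β + 2)) * (t + 1) ^ (0 + (β + 2)) *
        jacobiSeries m (d + (β + 2) : ℕ) (0 + (β + 2) : ℕ) t := by
    funext t; push_cast; ring_nf
  have h2 : (fun x => (x - 1) ^ d * (x + 1) ^ 0 * jacobiSeries (m + (β + 2)) d (0 : ℕ) x) =
      fun t => (t - 1) ^ (0 + d) * jacobiSeries (m + (β + 2)) (0 + d : ℕ) 0 t := by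
    funext t; simp
  have h3 : (fun x => (x - 1) ^ 0 * jacobiSeries (m + (β + 2)) (0 : ℕ) (0 + d) x) =
      jacobiSeries ((m + 1) + (β + 1)) 0 d := by
    funext t; simp only [pow_zero, one_mul, Nat.cast_zero, zero_add]; ring_nf
  rw [show β + d + β + 3 = (β + 1) + (d + (β + 2)) by ring,
    Function.iterate_add_apply deriv (β + 1), Function.iterate_add_apply deriv d,
    h1, iterate_deriv_sub_one_pow_mul_add_one_pow_mul_jacobiSeries,
    iterate_deriv_const_mul, iterate_deriv_const_mul,
    h2, iterate_deriv_sub_one_pow_mul_jacobiSeries, iterate_deriv_const_mul,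
    h3, iterate_deriv_jacobiSeries]
  funext x
  rw [show β + 1 + (d + (β + 2)) = (β + 2) + (d + (β + 1)) by ring, poch_add _ (β + 2),
    poch_add _ d]
  push_cast
  field_simp
  ring_nf

lemma iterate_deriv_weight_mul_jacobiSeries_of_ge (α β m : ℕ) (h : α ≤ β) :
    deriv^[α + β + 3] (fun t => (t - 1) ^ (α + 2) * (t + 1) ^ (β + 2) *
        jacobiSeries m (α + 2) (β + 2) t) =
      fun x => 2 * poch (m + 1) (α + β + 3) * jacobiSeries (m + 1) (β + 1) (α + 1) x := by
  obtain ⟨d, rfl⟩ := Nat.exists_eq_add_of_le h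
  have h1 : (fun t => (t - 1) ^ (α + 2) * (t + 1) ^ (α + d + 2) *
        jacobiSeries m (α + 2) (↑(α + d) + 2) t) =
      fun t => (t - 1) ^ (0 + (α + 2)) * (t + 1) ^ (d + (α + 2)) *
        jacobiSeries m (0 + (α + 2) : ℕ) (d + (α + 2) : ℕ) t := by
    funext t; push_cast; ring_nf
  have h2 : (fun x => (x - 1) ^ 0 * (x + 1) ^ d * jacobiSeries (m + (α + 2)) (0 : ℕ) d x) =
      fun t => (t + 1) ^ (0 + d) * jacobiSeries (m + (α + 2)) 0 (0 + d : ℕ) t := by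
    funext t; simp
  have h3 : (fun x => (x + 1) ^ 0 * jacobiSeries (m + (α + 2)) (0 + d) (0 : ℕ) x) =
      jacobiSeries ((m + 1) + (α + 1)) d 0 := by
    funext t; simp only [pow_zero, one_mul, Nat.cast_zero, zero_add]; ring_nf
  rw [show α + (α + d) + 3 = (α + 1) + (d + (α + 2)) by ring,
    Function.iterate_add_apply deriv (α + 1), Function.iterate_add_apply deriv d,
    h1, iterate_deriv_sub_one_pow_mul_add_one_pow_mul_jacobiSeries,
    iterate_deriv_const_mul, iterate_deriv_const_mul,
    h2, iterate_deriv_add_one_pow_mul_jacobiSeries, iterate_deriv_const_mul,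
    h3, iterate_deriv_jacobiSeries]
  funext x
  rw [show α + 1 + (d + (α + 2)) = (α + 2) + (d + (α + 1)) by ring, poch_add _ (α + 2),
    poch_add _ d]
  push_cast
  field_simp
  ring_nf

/-- `D_x^{α+β+3}[(x-1)^{α+2}(x+1)^{β+2} P_{n-2}^{α+2,β+2}(x)] = 2 (n-1)_{α+β+3} P_{n-1}^{β+1,α+1}(x)`. -/
theorem iterated_deriv_S_inner (α β n : ℕ) (hn : 2 ≤ n) (x : ℝ) :
    deriv^[α + β + 3] (fun t => (t - 1) ^ (α + 2) * (t + 1) ^ (β + 2) *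
        jacobiP (n - 2) ((α : ℝ) + 2) ((β : ℝ) + 2) t) x
      = 2 * poch ((n : ℝ) - 1) (α + β + 3) * jacobiP (n - 1) ((β : ℝ) + 1) ((α : ℝ) + 1) x := by
  obtain ⟨m, rfl⟩ := Nat.exists_eq_add_of_le' hn
  have hP : (fun t => (t - 1) ^ (α + 2) * (t + 1) ^ (β + 2) *
        jacobiP m ((α : ℝ) + 2) ((β : ℝ) + 2) t) =
      fun t => (t - 1) ^ (α + 2) * (t + 1) ^ (β + 2) * jacobiSeries m (α + 2) (β + 2) t := by
    funext t; rw [jacobiP_eq_jacobiSeries _ (by positivity)]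
  rw [Nat.add_sub_cancel, show m + 2 - 1 = m + 1 by omega, hP,
    jacobiP_eq_jacobiSeries _ (by positivity),
    show ((m + 2 : ℕ) : ℝ) - 1 = m + 1 by push_cast; ring]
  rcases le_total β α with h | h
  · exact congrFun (iterate_deriv_weight_mul_jacobiSeries_of_le α β m h) x
  · exact congrFun (iterate_deriv_weight_mul_jacobiSeries_of_ge α β m h) x
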